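/- arXiv:2504.16229 — 2 statements merged into one kernel-verified Lean document; each statement's English description precedes it below -/
import Mathlib

section
/- Let d ≥ 1 be an integer and z ≥ 1 a real. Let C ⊆ ℝ^d be finite with |C| ≥ 2, let x ∈ ℝ^d, and let u ∈ C satisfy ‖u − x‖₂ = dist(x,C). Then for every c ∈ C \ {u}: min_{q ∈ (C ∪ {x}) \ {c}} ‖c − q‖₂^z ≤ min_{q ∈ C \ {c}} ‖c − q‖₂^z ≤ 2^{z+1} · min_{q ∈ (C ∪ {x}) \ {c}} ‖c − q‖₂^z. -/
open scoped BigOperators Classical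

/-- `dSet x C` is the distance from the point `x` to the finite set `C`. -/
noncomputable def dSet {d : ℕ} (x : EuclideanSpace ℝ (Fin d))
    (C : Finset (EuclideanSpace ℝ (Fin d))) : ℝ :=
  sInf ((fun c => dist x c) '' (C : Set (EuclideanSpace ℝ (Fin d))))

/-- `min_{q ∈ Q} ‖c - q‖₂^z` over a finite set `Q`. -/
noncomputable def minPow {d : ℕ} (z : ℝ) (c : EuclideanSpace ℝ (Fin d))
    (Q : Finset (EuclideanSpace ℝ (Fin d))) : ℝ :=
  sInf ((fun q => dist c q ^ z) '' (Q : Set (EuclideanSpace ℝ (Fin d))))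

/-! If `u` is a nearest point of `C` to `x` and `c ∈ C`, then `dist x u ≤ dist x c`, so
`dist c u ≤ dist c x + dist x u ≤ 2 dist c x`. Hence adjoining `x` to `C` can shrink the
distance from `c` to its nearest other point by at most a factor `2`, i.e. `min ‖c - q‖^z`
by at most `2^z ≤ 2^{z+1}`. -/

lemma dist_le_two_mul_dist_of_dist_le {α : Type*} [PseudoMetricSpace α] {x u c : α}
    (h : dist x u ≤ dist x c) : dist c u ≤ 2 * dist c x := by
  linarith [dist_triangle c x u, dist_comm x c]

lemma dSet_le_dist {d : ℕ} {x c : EuclideanSpace ℝ (Fin d)}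
    {C : Finset (EuclideanSpace ℝ (Fin d))} (hc : c ∈ C) : dSet x C ≤ dist x c :=
  csInf_le (C.finite_toSet.image _).bddBelow (Set.mem_image_of_mem _ hc)

section minPow

variable {d : ℕ} {z : ℝ} {c : EuclideanSpace ℝ (Fin d)}
  {Q R : Finset (EuclideanSpace ℝ (Fin d))}

lemma minPow_le_rpow_dist {q : EuclideanSpace ℝ (Fin d)} (hq : q ∈ Q) :
    minPow z c Q ≤ dist c q ^ z :=
  csInf_le (Q.finite_toSet.image _).bddBelow (Set.mem_image_of_mem _ hq)

lemma exists_minPow_eq (hQ : Q.Nonempty) : ∃ q ∈ Q, minPow z c Q = dist c q ^ z := by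
  obtain ⟨q, hq, hmin⟩ : minPow z c Q ∈ (fun q => dist c q ^ z) '' (Q : Set _) :=
    ((Finset.coe_nonempty.2 hQ).image _).csInf_mem (Q.finite_toSet.image _)
  exact ⟨q, hq, hmin.symm⟩

lemma minPow_anti (hQR : Q ⊆ R) (hQ : Q.Nonempty) : minPow z c R ≤ minPow z c Q :=
  csInf_le_csInf (R.finite_toSet.image _).bddBelow ((Finset.coe_nonempty.2 hQ).image _)
    (Set.image_mono (Finset.coe_subset.2 hQR))

end minPow

theorem nearest_center_update_general
    (d : ℕ) (z : ℝ) (hz : 1 ≤ z)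
    (C : Finset (EuclideanSpace ℝ (Fin d)))
    (x u : EuclideanSpace ℝ (Fin d)) (hu : u ∈ C) (hux : dist x u = dSet x C) :
    ∀ c ∈ C, c ≠ u →
      minPow z c ((insert x C).erase c) ≤ minPow z c (C.erase c) ∧
        minPow z c (C.erase c) ≤ 2 ^ (z + 1) * minPow z c ((insert x C).erase c) := by
  intro c hc hcu
  have huC : u ∈ C.erase c := Finset.mem_erase.2 ⟨hcu.symm, hu⟩
  have hz₀ : 0 ≤ z := by linarith
  have hbound : ∀ q ∈ (insert x C).erase c, minPow z c (C.erase c) ≤ 2 ^ z * dist c q ^ z := by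
    intro q hq
    rcases Finset.mem_insert.1 (Finset.mem_of_mem_erase hq) with rfl | hqC
    · calc minPow z c (C.erase c) ≤ dist c u ^ z := minPow_le_rpow_dist huC
        _ ≤ (2 * dist c q) ^ z := by
          gcongr
          exact dist_le_two_mul_dist_of_dist_le (hux ▸ dSet_le_dist hc)
        _ = 2 ^ z * dist c q ^ z := Real.mul_rpow zero_le_two dist_nonneg
    · calc minPow z c (C.erase c) ≤ dist c q ^ z :=
            minPow_le_rpow_dist (Finset.mem_erase.2 ⟨Finset.ne_of_mem_erase hq, hqC⟩)
        _ ≤ 2 ^ z * dist c q ^ z :=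
          le_mul_of_one_le_left (by positivity) (Real.one_le_rpow one_le_two hz₀)
  obtain ⟨q, hq, hmin⟩ := exists_minPow_eq (z := z) (c := c)
    ⟨u, Finset.mem_erase_of_ne_of_mem hcu.symm (Finset.mem_insert_of_mem hu)⟩
  refine ⟨minPow_anti (Finset.erase_subset_erase _ (Finset.subset_insert _ _)) ⟨u, huC⟩, ?_⟩
  calc minPow z c (C.erase c) ≤ 2 ^ z * dist c q ^ z := hbound q hq
    _ ≤ 2 ^ (z + 1) * dist c q ^ z := by gcongr <;> norm_num
    _ = 2 ^ (z + 1) * minPow z c ((insert x C).erase c) := by rw [hmin]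

/-- If `u` is a nearest center of `C` to `x`, then for any other center `c ∈ C`,
adjoining `x` to `C` changes `min_{q ≠ c} ‖c - q‖₂^z` by at most a `2^{z+1}` factor. -/
theorem nearest_center_update
    (d : ℕ) (hd : 1 ≤ d) (z : ℝ) (hz : 1 ≤ z)
    (C : Finset (EuclideanSpace ℝ (Fin d))) (hC : 2 ≤ C.card)
    (x u : EuclideanSpace ℝ (Fin d)) (hu : u ∈ C) (hux : dist x u = dSet x C) :
    ∀ c ∈ C, c ≠ u →
      minPow z c ((insert x C).erase c) ≤ minPow z c (C.erase c) ∧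
        minPow z c (C.erase c) ≤ 2 ^ (z + 1) * minPow z c ((insert x C).erase c) :=
  nearest_center_update_general d z hz C x u hu hux
end

section
/- Fix an integer k ≥ 1, a real z ≥ 1, and reals ζ₁, ζ₂ ≥ 1. There exist constants γ₁, γ₂ ≥ 1 depending only on z, ζ₁, ζ₂ such that the following holds for every integer d ≥ 1, every finite X ⊆ ℝ^d with more than k distinct points, and every x ∈ X such that X \ {x} ≠ ∅. Suppose that for each p ∈ X with p ≠ x we are given: a set Q_p ⊆ X with p ∈ Q_p, |Q_p| ≤ k, and Cost(X,Q_p) ≤ ζ₁ · min{Cost(X,T) : T ⊆ X, p ∈ T, |T| ≤ k}; a real Ψ_p with (1/ζ₂)·Cost(X,Q_p) ≤ Ψ_p ≤ ζ₂·Cost(X,Q_p); and an assignment π_p for (X,Q_p). For each such p set r_p = ‖x−p‖₂ and n_b(p) = #{y ∈ X : ‖π_p(y) − x‖₂ ≤ r_p/2}, and define ŝ(x) = max over p ∈ X \ {x} of r_p^z / (Ψ_p + n_b(p) · r_p^z). Then (1/γ₁) · τ(x) ≤ ŝ(x) ≤ 2^z · γ₂ · τ(x), where τ(x) is the (k,z)-medoids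 sensitivity of x with respect to X. -/
open scoped BigOperators Classical

/-- `kzCost z X C = Σ_{x ∈ X} dist(x,C)^z`. -/
noncomputable def kzCost {d : ℕ} (z : ℝ) (X C : Finset (EuclideanSpace ℝ (Fin d))) : ℝ :=
  ∑ x ∈ X, dSet x C ^ z

/-- The `(k,z)`-medoids sensitivity of `x` with respect to `X`. -/
noncomputable def medoidSens {d : ℕ} (z : ℝ) (k : ℕ)
    (X : Finset (EuclideanSpace ℝ (Fin d))) (x : EuclideanSpace ℝ (Fin d)) : ℝ :=
  sSup {r : ℝ | ∃ C : Finset (EuclideanSpace ℝ (Fin d)),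
    C ⊆ X ∧ C.Nonempty ∧ C.card ≤ k ∧ r = dSet x C ^ z / kzCost z X C}

/-!
Lower bound: let `C` attain `τ(x)` and let `p ∈ C` be its center nearest to `x`, at distance `r`.
Since `p ∈ C`, the approximation guarantee for `Q_p` gives `Ψ_p ≲ Cost(X, Q_p) ≲ Cost(X, C)`.
Every `y` with `‖π_p(y) - x‖ ≤ r/2` satisfies `r/2 ≤ dist(y, Q_p) + dist(y, C)` (triangle
inequality through `x`), so it pays `(r/4)^z` to one of the two costs, whence
`n_b(p) r^z ≲ Cost(X, C)` and `τ(x) = r^z / Cost(X, C) ≲ r^z / (Ψ_p + n_b(p) r^z)`.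

Upper bound: for `p ≠ x`, drop from `Q_p` the centers within `r_p/2` of `x`. The center `p`
survives, so the result `C` is a solution with `dist(x, C) ≥ r_p/2`. Only points counted by
`n_b(p)` can lose their center; rerouted to `p`, each of them pays at most `dist(y, Q_p) + 3r_p/2`. Hence `Cost(X, C) ≲ Cost(X, Q_p) + n_b(p) r_p^z ≲ Ψ_p + n_b(p) r_p^z`,
and `τ(x) ≥ (r_p/2)^z / Cost(X, C)`.
-/

open Finset

lemma Real.add_rpow_le_two_rpow_mul_rpow_add_rpow {a b p : ℝ} (ha : 0 ≤ a) (hb : 0 ≤ b)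
    (hp : 0 ≤ p) : (a + b) ^ p ≤ 2 ^ p * (a ^ p + b ^ p) := calc
  (a + b) ^ p ≤ (2 * max a b) ^ p := by
    gcongr; rw [two_mul]; exact add_le_add (le_max_left a b) (le_max_right a b)
  _ = 2 ^ p * max a b ^ p := Real.mul_rpow zero_le_two (ha.trans (le_max_left a b))
  _ ≤ 2 ^ p * (a ^ p + b ^ p) := by
    gcongr
    rcases le_total a b with h | h
    · rw [max_eq_right h]; linarith [Real.rpow_nonneg ha p]
    · rw [max_eq_left h]; linarith [Real.rpow_nonneg hb p]

lemma div_le_mul_div_of_le_mul {a b c γ : ℝ} (ha : 0 ≤ a) (hb : 0 ≤ b) (hc : 0 < c)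
    (h : c ≤ γ * b) : a / b ≤ γ * (a / c) := by
  rcases hb.eq_or_lt with rfl | hb
  · simp only [mul_zero] at h; linarith
  rw [div_le_iff₀ hb]
  calc a = a / c * c := (div_mul_cancel₀ a hc.ne').symm
    _ ≤ a / c * (γ * b) := mul_le_mul_of_nonneg_left h (div_nonneg ha hc.le)
    _ = γ * (a / c) * b := by ring

section Clustering

variable {d k : ℕ} {z : ℝ} {x y p q : EuclideanSpace ℝ (Fin d)}
  {C Q X : Finset (EuclideanSpace ℝ (Fin d))}

lemma dSet_nonneg : 0 ≤ dSet x C :=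
  Real.sInf_nonneg (by rintro r ⟨c, -, rfl⟩; exact dist_nonneg)

lemma dSet_le_dist_s9 (hq : q ∈ C) : dSet x C ≤ dist x q :=
  csInf_le ⟨0, by rintro r ⟨c, -, rfl⟩; exact dist_nonneg⟩ ⟨q, hq, rfl⟩

lemma exists_mem_dist_eq_dSet (hC : C.Nonempty) : ∃ c ∈ C, dist x c = dSet x C :=
  ((coe_nonempty.2 hC).image _).csInf_mem (C.finite_toSet.image _)

lemma le_dSet {a : ℝ} (hC : C.Nonempty) (h : ∀ c ∈ C, a ≤ dist x c) : a ≤ dSet x C := by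
  obtain ⟨c, hc, hdist⟩ := exists_mem_dist_eq_dSet (x := x) hC
  exact hdist ▸ h c hc

lemma dSet_pos_of_notMem (hC : C.Nonempty) (hx : x ∉ C) : 0 < dSet x C := by
  obtain ⟨c, hc, hdist⟩ := exists_mem_dist_eq_dSet (x := x) hC
  exact hdist ▸ dist_pos.2 fun h => hx (h ▸ hc)

lemma dSet_le_dist_add_dSet (hC : C.Nonempty) : dSet x C ≤ dist x y + dSet y C := by
  obtain ⟨c, hc, hdist⟩ := exists_mem_dist_eq_dSet (x := y) hC
  calc dSet x C ≤ dist x c := dSet_le_dist_s9 hc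
    _ ≤ dist x y + dist y c := dist_triangle x y c
    _ = dist x y + dSet y C := by rw [hdist]

lemma kzCost_nonneg : 0 ≤ kzCost z X C :=
  sum_nonneg fun _ _ => Real.rpow_nonneg dSet_nonneg z

lemma kzCost_pos (hC : C.Nonempty) (hCX : #C < #X) : 0 < kzCost z X C := by
  obtain ⟨y, hyX, hyC⟩ := not_subset.1 fun h => (card_le_card h).not_gt hCX
  exact (Real.rpow_pos_of_pos (dSet_pos_of_notMem hC hyC) z).trans_le <|
    single_le_sum (f := fun y => dSet y C ^ z) (fun _ _ => Real.rpow_nonneg dSet_nonneg z) hyX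

lemma medoidRatios_finite (z : ℝ) (k : ℕ) (X : Finset (EuclideanSpace ℝ (Fin d)))
    (x : EuclideanSpace ℝ (Fin d)) :
    {r : ℝ | ∃ C : Finset (EuclideanSpace ℝ (Fin d)),
      C ⊆ X ∧ C.Nonempty ∧ C.card ≤ k ∧ r = dSet x C ^ z / kzCost z X C}.Finite :=
  (X.powerset.finite_toSet.image fun C => dSet x C ^ z / kzCost z X C).subset <| by
    rintro r ⟨C, hCX, -, -, rfl⟩
    exact ⟨C, mem_powerset.2 hCX, rfl⟩

lemma div_kzCost_le_medoidSens (hCX : C ⊆ X) (hC : C.Nonempty) (hCk : #C ≤ k) :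
    dSet x C ^ z / kzCost z X C ≤ medoidSens z k X x :=
  le_csSup (medoidRatios_finite z k X x).bddAbove ⟨C, hCX, hC, hCk, rfl⟩

lemma exists_medoidSens_eq (hk : 1 ≤ k) (hX : X.Nonempty) :
    ∃ C ⊆ X, C.Nonempty ∧ #C ≤ k ∧ medoidSens z k X x = dSet x C ^ z / kzCost z X C := by
  obtain ⟨y, hy⟩ := hX
  obtain ⟨C, hCX, hC, hCk, hτ⟩ := Set.Nonempty.csSup_mem
    (by exact ⟨_, {y}, singleton_subset_iff.2 hy, singleton_nonempty y, by simpa using hk, rfl⟩)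
    (medoidRatios_finite z k X x)
  exact ⟨C, hCX, hC, hCk, hτ⟩

/-- `n_b(p)` of the paper, for `π = π_p` and `r = r_p`. -/
noncomputable def nearCount (X : Finset (EuclideanSpace ℝ (Fin d)))
    (π : EuclideanSpace ℝ (Fin d) → EuclideanSpace ℝ (Fin d)) (x : EuclideanSpace ℝ (Fin d))
    (r : ℝ) : ℕ :=
  #{y ∈ X | dist (π y) x ≤ r / 2}

lemma half_dSet_le_dist_add_dSet (hC : C.Nonempty) (hq : dist q x ≤ dSet x C / 2) :
    dSet x C / 2 ≤ dist y q + dSet y C := by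
  have hxy := dSet_le_dist_add_dSet (x := x) (y := y) hC
  have hxqy := dist_triangle x q y
  rw [dist_comm x q, dist_comm q y] at hxqy
  linarith

lemma nearCount_mul_rpow_le (hz : 0 ≤ z) (hC : C.Nonempty)
    {π : EuclideanSpace ℝ (Fin d) → EuclideanSpace ℝ (Fin d)}
    (hπ : ∀ y ∈ X, dist y (π y) = dSet y Q) :
    nearCount X π x (dSet x C) * (dSet x C / 4) ^ z ≤ kzCost z X Q + kzCost z X C := by
  have hpays : ∀ y ∈ X, dist (π y) x ≤ dSet x C / 2 →
      (dSet x C / 4) ^ z ≤ dSet y Q ^ z + dSet y C ^ z := by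
    intro y hy hnear
    have hsplit := half_dSet_le_dist_add_dSet (y := y) hC hnear
    rw [hπ y hy] at hsplit
    have hQ := Real.rpow_nonneg (dSet_nonneg (x := y) (C := Q)) z
    have hC := Real.rpow_nonneg (dSet_nonneg (x := y) (C := C)) z
    have hr : 0 ≤ dSet x C / 4 := by linarith [dSet_nonneg (x := x) (C := C)]
    rcases le_total (dSet x C / 4) (dSet y Q) with h | h
    · linarith [Real.rpow_le_rpow hr h hz]
    · linarith [Real.rpow_le_rpow hr (by linarith : dSet x C / 4 ≤ dSet y C) hz]
  calc (nearCount X π x (dSet x C) : ℝ) * (dSet x C / 4) ^ z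
      = ∑ y ∈ X with dist (π y) x ≤ dSet x C / 2, (dSet x C / 4) ^ z := by
        rw [sum_const, nsmul_eq_mul, nearCount]
    _ ≤ ∑ y ∈ X with dist (π y) x ≤ dSet x C / 2, (dSet y Q ^ z + dSet y C ^ z) :=
        sum_le_sum fun y hy => hpays y (mem_filter.1 hy).1 (mem_filter.1 hy).2
    _ ≤ ∑ y ∈ X, (dSet y Q ^ z + dSet y C ^ z) :=
        sum_le_sum_of_subset_of_nonneg (filter_subset _ _) fun y _ _ =>
          add_nonneg (Real.rpow_nonneg dSet_nonneg z) (Real.rpow_nonneg dSet_nonneg z)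
    _ = kzCost z X Q + kzCost z X C := sum_add_distrib

lemma dSet_filter_far_rpow_le (hz : 0 ≤ z) (hpQ : p ∈ Q) (hpx : p ≠ x) (hqQ : q ∈ Q)
    (hq : dist y q = dSet y Q) :
    dSet y {c ∈ Q | dist x p / 2 < dist x c} ^ z ≤
      2 ^ z * dSet y Q ^ z + if dist q x ≤ dist x p / 2 then 3 ^ z * dist x p ^ z else 0 := by
  have hr : 0 < dist x p := dist_pos.2 hpx.symm
  split_ifs with hnear
  · have hpC : p ∈ {c ∈ Q | dist x p / 2 < dist x c} := mem_filter.2 ⟨hpQ, by linarith⟩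
    have hreroute : dSet y {c ∈ Q | dist x p / 2 < dist x c} ≤ dSet y Q + 3 / 2 * dist x p := by
      linarith [dSet_le_dist_s9 (x := y) hpC, dist_triangle4 y q x p]
    calc dSet y {c ∈ Q | dist x p / 2 < dist x c} ^ z
        ≤ (dSet y Q + 3 / 2 * dist x p) ^ z := Real.rpow_le_rpow dSet_nonneg hreroute hz
      _ ≤ 2 ^ z * (dSet y Q ^ z + (3 / 2 * dist x p) ^ z) :=
          Real.add_rpow_le_two_rpow_mul_rpow_add_rpow dSet_nonneg (by positivity) hz
      _ = 2 ^ z * dSet y Q ^ z + 3 ^ z * dist x p ^ z := by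
          have h3 : (2 : ℝ) ^ z * (3 / 2) ^ z = 3 ^ z := by
            rw [← Real.mul_rpow zero_le_two (by norm_num)]; norm_num
          rw [mul_add, Real.mul_rpow (by norm_num) hr.le, ← mul_assoc, h3]
  · have hqC : q ∈ {c ∈ Q | dist x p / 2 < dist x c} :=
      mem_filter.2 ⟨hqQ, by rw [dist_comm x q]; exact not_le.1 hnear⟩
    rw [add_zero]
    calc dSet y {c ∈ Q | dist x p / 2 < dist x c} ^ z ≤ dSet y Q ^ z :=
          Real.rpow_le_rpow dSet_nonneg (hq ▸ dSet_le_dist_s9 hqC) hz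
      _ ≤ 2 ^ z * dSet y Q ^ z :=
          le_mul_of_one_le_left (Real.rpow_nonneg dSet_nonneg z) (Real.one_le_rpow one_le_two hz)

lemma kzCost_filter_far_le (hz : 0 ≤ z) (hpQ : p ∈ Q) (hpx : p ≠ x)
    {π : EuclideanSpace ℝ (Fin d) → EuclideanSpace ℝ (Fin d)}
    (hπ : ∀ y ∈ X, π y ∈ Q ∧ dist y (π y) = dSet y Q) :
    kzCost z X {c ∈ Q | dist x p / 2 < dist x c} ≤
      2 ^ z * kzCost z X Q + nearCount X π x (dist x p) * (3 ^ z * dist x p ^ z) := calc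
  _ ≤ ∑ y ∈ X, (2 ^ z * dSet y Q ^ z +
        if dist (π y) x ≤ dist x p / 2 then 3 ^ z * dist x p ^ z else 0) :=
      sum_le_sum fun y hy => dSet_filter_far_rpow_le hz hpQ hpx (hπ y hy).1 (hπ y hy).2
  _ = _ := by rw [sum_add_distrib, ← mul_sum, ← sum_filter, sum_const, nsmul_eq_mul]; rfl

variable {π : EuclideanSpace ℝ (Fin d) → EuclideanSpace ℝ (Fin d)} {Ψ ζ₁ ζ₂ : ℝ}

lemma dSet_rpow_div_kzCost_le (hz : 0 ≤ z) (hζ₂ : 0 ≤ ζ₂) (hC : C.Nonempty)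
    (hp : dist x p = dSet x C) (hQC : kzCost z X Q ≤ ζ₁ * kzCost z X C) (hΨ0 : 0 < Ψ)
    (hΨ : Ψ ≤ ζ₂ * kzCost z X Q) (hπ : ∀ y ∈ X, dist y (π y) = dSet y Q) :
    dSet x C ^ z / kzCost z X C ≤ (ζ₁ * ζ₂ + 4 ^ z * (1 + ζ₁)) *
      (dist x p ^ z / (Ψ + nearCount X π x (dist x p) * dist x p ^ z)) := by
  rw [hp]
  have hΨC : Ψ ≤ ζ₁ * ζ₂ * kzCost z X C := by
    nlinarith [mul_le_mul_of_nonneg_left hQC hζ₂]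
  have hcount : (nearCount X π x (dSet x C) : ℝ) * dSet x C ^ z ≤
      4 ^ z * (1 + ζ₁) * kzCost z X C := by
    have hquarter : dSet x C ^ z = 4 ^ z * (dSet x C / 4) ^ z := by
      rw [Real.div_rpow dSet_nonneg (by norm_num),
        mul_div_cancel₀ _ (Real.rpow_pos_of_pos (by norm_num) z).ne']
    calc (nearCount X π x (dSet x C) : ℝ) * dSet x C ^ z
        = 4 ^ z * (nearCount X π x (dSet x C) * (dSet x C / 4) ^ z) := by rw [hquarter]; ring
      _ ≤ 4 ^ z * ((1 + ζ₁) * kzCost z X C) := by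
          refine mul_le_mul_of_nonneg_left ?_ (by positivity)
          linarith [nearCount_mul_rpow_le (x := x) hz hC hπ]
      _ = 4 ^ z * (1 + ζ₁) * kzCost z X C := by ring
  refine div_le_mul_div_of_le_mul (Real.rpow_nonneg dSet_nonneg z) kzCost_nonneg
    (add_pos_of_pos_of_nonneg hΨ0 (mul_nonneg (Nat.cast_nonneg _) (Real.rpow_nonneg dSet_nonneg z))) ?_
  linarith

lemma rpow_div_le_medoidSens (hz : 0 ≤ z) (hζ₂ : 0 ≤ ζ₂) (hQX : Q ⊆ X) (hpQ : p ∈ Q)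
    (hpx : p ≠ x) (hQk : #Q ≤ k) (hkX : k < #X) (hΨ0 : 0 < Ψ) (hQΨ : kzCost z X Q ≤ ζ₂ * Ψ)
    (hπ : ∀ y ∈ X, π y ∈ Q ∧ dist y (π y) = dSet y Q) :
    dist x p ^ z / (Ψ + nearCount X π x (dist x p) * dist x p ^ z) ≤
      2 ^ z * (2 ^ z * ζ₂ + 3 ^ z) * medoidSens z k X x := by
  set C := {c ∈ Q | dist x p / 2 < dist x c}
  have hpC : p ∈ C := mem_filter.2 ⟨hpQ, by linarith [dist_pos.2 hpx.symm]⟩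
  have hCk : #C ≤ k := (card_filter_le _ _).trans hQk
  have hfar : dist x p / 2 ≤ dSet x C := le_dSet ⟨p, hpC⟩ fun c hc => (mem_filter.1 hc).2.le
  have hcost : kzCost z X C ≤ (2 ^ z * ζ₂ + 3 ^ z) *
      (Ψ + nearCount X π x (dist x p) * dist x p ^ z) := by
    have h2 : 0 ≤ (2 : ℝ) ^ z := by positivity
    nlinarith [kzCost_filter_far_le (X := X) hz hpQ hpx hπ, mul_le_mul_of_nonneg_left hQΨ h2,
      mul_nonneg (mul_nonneg h2 hζ₂) (by positivity :
        (0 : ℝ) ≤ nearCount X π x (dist x p) * dist x p ^ z),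
      mul_nonneg (by positivity : (0 : ℝ) ≤ 3 ^ z) hΨ0.le]
  calc dist x p ^ z / (Ψ + nearCount X π x (dist x p) * dist x p ^ z)
      = 2 ^ z * ((dist x p / 2) ^ z / (Ψ + nearCount X π x (dist x p) * dist x p ^ z)) := by
        rw [Real.div_rpow dist_nonneg zero_le_two, mul_div_assoc', mul_div_cancel₀ _
          (by positivity)]
    _ ≤ 2 ^ z * ((2 ^ z * ζ₂ + 3 ^ z) * ((dist x p / 2) ^ z / kzCost z X C)) := by
        gcongr
        exact div_le_mul_div_of_le_mul (by positivity) (by positivity)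
          (kzCost_pos ⟨p, hpC⟩ (hCk.trans_lt hkX)) hcost
    _ ≤ 2 ^ z * ((2 ^ z * ζ₂ + 3 ^ z) * (dSet x C ^ z / kzCost z X C)) := by
        gcongr
        exact kzCost_nonneg
    _ ≤ 2 ^ z * (2 ^ z * ζ₂ + 3 ^ z) * medoidSens z k X x := by
        rw [mul_assoc]
        gcongr
        exact div_kzCost_le_medoidSens ((filter_subset _ _).trans hQX) ⟨p, hpC⟩ hCk

end Clustering

/-- The estimate `ŝ(x) = max_{p ∈ X \ {x}} r_p^z / (Ψ_p + n_b(p)·r_p^z)` is a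
`2^z`-times-constant-factor approximation of the `(k,z)`-medoids sensitivity `τ(x)`. -/
theorem batch_sensitivity_estimate
    (z ζ₁ ζ₂ : ℝ) (hz : 1 ≤ z) (hζ₁ : 1 ≤ ζ₁) (hζ₂ : 1 ≤ ζ₂) :
    ∃ γ₁ γ₂ : ℝ, 1 ≤ γ₁ ∧ 1 ≤ γ₂ ∧
      ∀ (k d : ℕ), 1 ≤ k → 1 ≤ d →
        ∀ (X : Finset (EuclideanSpace ℝ (Fin d))) (x : EuclideanSpace ℝ (Fin d))
          (Q : EuclideanSpace ℝ (Fin d) → Finset (EuclideanSpace ℝ (Fin d)))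
          (Ψ : EuclideanSpace ℝ (Fin d) → ℝ)
          (π : EuclideanSpace ℝ (Fin d) → EuclideanSpace ℝ (Fin d) → EuclideanSpace ℝ (Fin d)),
          k < X.card → x ∈ X → (∃ p ∈ X, p ≠ x) →
          (∀ p ∈ X, p ≠ x →
            Q p ⊆ X ∧ p ∈ Q p ∧ (Q p).card ≤ k ∧
            (∀ T : Finset (EuclideanSpace ℝ (Fin d)), T ⊆ X → p ∈ T → T.card ≤ k →
              kzCost z X (Q p) ≤ ζ₁ * kzCost z X T) ∧
            (1 / ζ₂) * kzCost z X (Q p) ≤ Ψ p ∧ Ψ p ≤ ζ₂ * kzCost z X (Q p) ∧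
            (∀ y ∈ X, π p y ∈ Q p ∧ dist y (π p y) = dSet y (Q p))) →
          (1 / γ₁) * medoidSens z k X x ≤
              sSup {r : ℝ | ∃ p ∈ X, p ≠ x ∧
                r = dist x p ^ z / (Ψ p +
                  ((X.filter (fun y => dist (π p y) x ≤ dist x p / 2)).card : ℝ)
                    * dist x p ^ z)} ∧
            sSup {r : ℝ | ∃ p ∈ X, p ≠ x ∧
                r = dist x p ^ z / (Ψ p +
                  ((X.filter (fun y => dist (π p y) x ≤ dist x p / 2)).card : ℝ)
                    * dist x p ^ z)} ≤ 2 ^ z * γ₂ * medoidSens z k X x := by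
  have hz₀ : 0 ≤ z := by linarith
  have h2z := Real.one_le_rpow one_le_two hz₀
  have h4z := Real.one_le_rpow (by norm_num : (1 : ℝ) ≤ 4) hz₀
  refine ⟨ζ₁ * ζ₂ + 4 ^ z * (1 + ζ₁), 2 ^ z * ζ₂ + 3 ^ z, by nlinarith,
    by nlinarith [Real.rpow_nonneg zero_le_three z], ?_⟩
  rintro k d hk - X x Q Ψ π hkX hxX ⟨p₀, hp₀X, hp₀x⟩ hH
  have hΨ : ∀ p ∈ X, p ≠ x → 0 < Ψ p ∧ kzCost z X (Q p) ≤ ζ₂ * Ψ p := fun p hpX hpx => by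
    obtain ⟨-, hpQ, hQk, -, hΨl, -⟩ := hH p hpX hpx
    have hQ := kzCost_pos (z := z) ⟨p, hpQ⟩ (hQk.trans_lt hkX)
    rw [one_div_mul_eq_div, div_le_iff₀' (by linarith)] at hΨl
    exact ⟨pos_of_mul_pos_right (hQ.trans_le hΨl) (by linarith), hΨl⟩
  have hbdd : BddAbove {r : ℝ | ∃ p ∈ X, p ≠ x ∧ r = dist x p ^ z / (Ψ p +
      nearCount X (π p) x (dist x p) * dist x p ^ z)} :=
    (X.finite_toSet.image fun p => dist x p ^ z / (Ψ p +
      nearCount X (π p) x (dist x p) * dist x p ^ z)).bddAbove.mono <| by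
      rintro r ⟨p, hpX, -, rfl⟩
      exact ⟨p, hpX, rfl⟩
  constructor
  · obtain ⟨C, hCX, hC, hCk, hτ⟩ := exists_medoidSens_eq (z := z) (x := x) hk ⟨x, hxX⟩
    obtain ⟨p, hpC, hp⟩ := exists_mem_dist_eq_dSet (x := x) hC
    rcases eq_or_ne p x with rfl | hpx
    · rw [hτ, ← hp, dist_self, Real.zero_rpow (by linarith), zero_div, mul_zero]
      refine Real.sSup_nonneg fun r ⟨q, hqX, hqx, hr⟩ => hr ▸ div_nonneg (by positivity) ?_
      exact add_nonneg (hΨ q hqX hqx).1.le (by positivity)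
    obtain ⟨-, -, -, happrox, -, hΨu, hπ⟩ := hH p (hCX hpC) hpx
    refine le_trans ?_ (le_csSup hbdd ⟨p, hCX hpC, hpx, rfl⟩)
    rw [one_div_mul_eq_div, div_le_iff₀' (by nlinarith), hτ]
    exact dSet_rpow_div_kzCost_le hz₀ (by linarith) hC hp (happrox C hCX hpC hCk)
      (hΨ p (hCX hpC) hpx).1 hΨu fun y hy => (hπ y hy).2
  · refine csSup_le ⟨_, p₀, hp₀X, hp₀x, rfl⟩ fun r ⟨p, hpX, hpx, hr⟩ => hr ▸ ?_
    obtain ⟨hQX, hpQ, hQk, -, -, -, hπ⟩ := hH p hpX hpx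
    exact rpow_div_le_medoidSens hz₀ (by linarith) hQX hpQ hpx hQk hkX (hΨ p hpX hpx).1
      (hΨ p hpX hpx).2 hπ
end
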